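/- arXiv:2511.09196 — 3 statements merged into one kernel-verified Lean document; each statement's English description precedes it below -/
import Mathlib

section
/- If λ = μ + iω (ω ≠ 0) is a complex root of the Euler–Lotka equation ∫₀^∞ e^{-λa} β(a)𝓕(a) da = 1, where β𝓕 is nonnegative, integrable, and not supported on a lattice (in particular not a.e. zero), then the real part μ is strictly less than the unique real root r, i.e., all complex roots have real part smaller than the Malthusian parameter. -/
open MeasureTheory Set Filter Real

/-! If `λ = μ + iω` is a root with `μ ≥ r`, then `F(μ) ≤ F(r) = 1 = Re F(λ)`, while
`Re F(λ) ≤ |F(λ)| ≤ F(μ)` by the triangle inequality. Hence equality holds in the triangle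
inequality, which forces `cos (ω a) = 1`, i.e. `a ∈ (2π/|ω|) ℤ`, almost everywhere on the support
of `β𝓕`: the kernel lives on a lattice. -/

theorem integral_exp_neg_mul_le_of_le {ν : Measure ℝ} {A : ℝ → ℝ}
    (ha : ∀ᵐ a ∂ν, 0 ≤ a) (hA : 0 ≤ᵐ[ν] A) {r μ : ℝ} (hrμ : r ≤ μ)
    (hr : Integrable (fun a => exp (-r * a) * A a) ν)
    (hμ : Integrable (fun a => exp (-μ * a) * A a) ν) :
    ∫ a, exp (-μ * a) * A a ∂ν ≤ ∫ a, exp (-r * a) * A a ∂ν := by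
  refine integral_mono_ae hμ hr ?_
  filter_upwards [ha, hA] with a ha hAa
  exact mul_le_mul_of_nonneg_right (exp_le_exp.2 (by nlinarith)) hAa

theorem ae_norm_eq_re_of_integral_norm_le_re {α : Type*} [MeasurableSpace α] {ν : Measure α}
    {f : α → ℂ} (hf : Integrable f ν) (h : ∫ a, ‖f a‖ ∂ν ≤ (∫ a, f a ∂ν).re) :
    ∀ᵐ a ∂ν, ‖f a‖ = (f a).re := by
  have hgap_nonneg : 0 ≤ᵐ[ν] fun a => ‖f a‖ - (f a).re :=
    ae_of_all _ fun a => sub_nonneg.2 (Complex.re_le_norm _)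
  have hf_re : Integrable (fun a => (f a).re) ν := hf.re
  have hgap_int : Integrable (fun a => ‖f a‖ - (f a).re) ν := hf.norm.sub hf_re
  have hgap_zero : ∫ a, ‖f a‖ - (f a).re ∂ν = 0 := by
    refine le_antisymm ?_ (integral_nonneg_of_ae hgap_nonneg)
    have hre_integral : ∫ a, (f a).re ∂ν = (∫ a, f a ∂ν).re := integral_re hf
    rw [integral_sub hf.norm hf_re, hre_integral]
    exact sub_nonpos.2 h
  filter_upwards [(integral_eq_zero_iff_of_nonneg_ae hgap_nonneg hgap_int).1 hgap_zero] with a ha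
  exact sub_eq_zero.1 ha

theorem eq_zero_or_cos_eq_one_of_norm_eq_re {t c : ℝ} (hc : 0 ≤ c)
    (h : ‖Complex.exp (t * Complex.I) * c‖ = (Complex.exp (t * Complex.I) * c).re) :
    c = 0 ∨ cos t = 1 := by
  rw [norm_mul, Complex.norm_exp_ofReal_mul_I, Complex.norm_real, norm_of_nonneg hc,
    Complex.re_mul_ofReal, Complex.exp_ofReal_mul_I_re] at h
  rcases mul_eq_zero.1 (show c * (1 - cos t) = 0 by linarith) with hc0 | hcos
  · exact .inl hc0
  · exact .inr (by linarith)

theorem ae_eq_zero_or_cos_eq_one_of_integral_cexp_mul_eq_one {α : Type*} [MeasurableSpace α]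
    {ν : Measure α} {θ g : α → ℝ} (hθ : Measurable θ) (hg : Integrable g ν) (hg_nonneg : 0 ≤ᵐ[ν] g)
    (hg_le : ∫ a, g a ∂ν ≤ 1) (h : ∫ a, Complex.exp (θ a * Complex.I) * g a ∂ν = 1) :
    ∀ᵐ a ∂ν, g a = 0 ∨ cos (θ a) = 1 := by
  have hf_int : Integrable (fun a => Complex.exp (θ a * Complex.I) * g a) ν :=
    hg.ofReal.bdd_mul (c := 1)
      (by fun_prop : Measurable fun a => Complex.exp (θ a * Complex.I)).aestronglyMeasurable
      (ae_of_all _ fun a => (Complex.norm_exp_ofReal_mul_I _).le)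
  have hf_norm : ∫ a, ‖Complex.exp (θ a * Complex.I) * g a‖ ∂ν ≤ (1 : ℂ).re := by
    refine (integral_congr_ae ?_).trans_le hg_le
    filter_upwards [hg_nonneg] with a ha
    rw [norm_mul, Complex.norm_exp_ofReal_mul_I, Complex.norm_real, norm_of_nonneg ha, one_mul]
  filter_upwards [ae_norm_eq_re_of_integral_norm_le_re hf_int (h ▸ hf_norm), hg_nonneg]
    with a ha hga
  exact eq_zero_or_cos_eq_one_of_norm_eq_re hga ha

theorem exists_int_eq_mul_of_cos_mul_eq_one {ω a : ℝ} (hω : ω ≠ 0) (h : cos (ω * a) = 1) :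
    ∃ k : ℤ, a = k * (2 * π / |ω|) := by
  obtain ⟨n, hn⟩ := (cos_eq_one_iff _).1 h
  rcases hω.lt_or_gt with hneg | hpos
  · refine ⟨-n, ?_⟩
    rw [abs_of_neg hneg]
    push_cast
    field_simp
    linarith
  · refine ⟨n, ?_⟩
    rw [abs_of_pos hpos]
    field_simp
    linarith

theorem cexp_neg_mul_mul_ofReal (μ ω a c : ℝ) :
    Complex.exp (-(μ + ω * Complex.I) * a) * c
      = Complex.exp (↑(-(ω * a)) * Complex.I) * ↑(exp (-μ * a) * c) := by
  push_cast
  rw [← mul_assoc, ← Complex.exp_add]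
  ring_nf

theorem complex_roots_below_malthusian_general
    (β 𝓕 : ℝ → ℝ)
    (hβ_nonneg : ∀ a, 0 ≤ a → 0 ≤ β a)
    (h𝓕_range : ∀ a, 0 ≤ a → 0 ≤ 𝓕 a ∧ 𝓕 a ≤ 1)
    (hA_not_lattice : ¬ ∃ δ : ℝ, 0 < δ ∧
      ∀ᵐ a ∂(volume.restrict (Ioi (0:ℝ))), β a * 𝓕 a ≠ 0 → ∃ k : ℤ, a = k * δ)
    (r : ℝ)
    (hr_int : IntegrableOn (fun a => Real.exp (-r * a) * (β a * 𝓕 a)) (Ioi 0))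
    (hr_root : ∫ a in Ioi (0:ℝ), Real.exp (-r * a) * (β a * 𝓕 a) = 1)
    (μ ω : ℝ) (hω : ω ≠ 0)
    (hμ_int : IntegrableOn (fun a => Real.exp (-μ * a) * (β a * 𝓕 a)) (Ioi 0))
    (h_root : ∫ a in Ioi (0:ℝ),
        Complex.exp (-(μ + ω * Complex.I) * a) * ((β a * 𝓕 a : ℝ) : ℂ) = 1) :
    μ < r := by
  by_contra! hrμ
  have hpos : ∀ᵐ a ∂(volume.restrict (Ioi (0:ℝ))), 0 ≤ a :=
    (ae_restrict_mem measurableSet_Ioi).mono fun _ ha => le_of_lt ha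
  have hA_nonneg : 0 ≤ᵐ[volume.restrict (Ioi (0:ℝ))] fun a => β a * 𝓕 a := by
    filter_upwards [hpos] with a ha
    exact mul_nonneg (hβ_nonneg a ha) (h𝓕_range a ha).1
  have hμ_le : ∫ a in Ioi (0:ℝ), exp (-μ * a) * (β a * 𝓕 a) ≤ 1 :=
    hr_root ▸ integral_exp_neg_mul_le_of_le hpos hA_nonneg hrμ hr_int hμ_int
  have hcos := ae_eq_zero_or_cos_eq_one_of_integral_cexp_mul_eq_one
    (by fun_prop : Measurable fun a : ℝ => -(ω * a)) hμ_int
    (hA_nonneg.mono fun a ha => mul_nonneg (exp_pos _).le ha) hμ_le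
    (by simpa only [cexp_neg_mul_mul_ofReal] using h_root)
  refine hA_not_lattice ⟨2 * π / |ω|, by positivity, ?_⟩
  filter_upwards [hcos] with a ha hA_ne
  rcases ha with h0 | hcos
  · exact absurd ((mul_eq_zero.1 h0).resolve_left (exp_pos _).ne') hA_ne
  · exact exists_int_eq_mul_of_cos_mul_eq_one hω (by rwa [cos_neg] at hcos)

/-- Any complex root `μ + iω` (`ω ≠ 0`) of the Euler–Lotka equation
`∫₀^∞ e^{-λa} β(a)𝓕(a) da = 1`, for a nonnegative integrable kernel `β𝓕` that is not
a.e. zero and not supported on a lattice, has real part strictly smaller than the unique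
real root `r` (the Malthusian parameter). -/
theorem complex_roots_below_malthusian
    (β 𝓕 : ℝ → ℝ)
    (hβ_nonneg : ∀ a, 0 ≤ a → 0 ≤ β a)
    (h𝓕_meas : Measurable 𝓕)
    (h𝓕_range : ∀ a, 0 ≤ a → 0 ≤ 𝓕 a ∧ 𝓕 a ≤ 1)
    (hA_int : IntegrableOn (fun a => β a * 𝓕 a) (Ioi 0))
    (hA_ne_zero : ¬ (fun a => β a * 𝓕 a) =ᵐ[volume.restrict (Ioi (0:ℝ))] 0)
    (hA_not_lattice : ¬ ∃ δ : ℝ, 0 < δ ∧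
      ∀ᵐ a ∂(volume.restrict (Ioi (0:ℝ))), β a * 𝓕 a ≠ 0 → ∃ k : ℤ, a = k * δ)
    (r : ℝ)
    (hr_int : IntegrableOn (fun a => Real.exp (-r * a) * (β a * 𝓕 a)) (Ioi 0))
    (hr_root : ∫ a in Ioi (0:ℝ), Real.exp (-r * a) * (β a * 𝓕 a) = 1)
    (μ ω : ℝ) (hω : ω ≠ 0)
    (hμ_int : IntegrableOn (fun a => Real.exp (-μ * a) * (β a * 𝓕 a)) (Ioi 0))
    (h_root : ∫ a in Ioi (0:ℝ),
        Complex.exp (-(μ + ω * Complex.I) * a) * ((β a * 𝓕 a : ℝ) : ℂ) = 1) :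
    μ < r :=
  complex_roots_below_malthusian_general β 𝓕 hβ_nonneg h𝓕_range hA_not_lattice r hr_int hr_root μ ω
    hω hμ_int h_root
end

section
/- Let j, τ, σ > 0 with j = τ²/σ², and let n = max(⌈j⌉, 2). Define μ and ν by 1/ν = (τ/n)(1 + √(n(n−j)/(2j))) and 1/μ = (τ/n)(1 − √(n(n−j)/(2j))), and let Y be the sum of n independent exponential random variables, n−2 of them with rate λ = n/τ and the remaining two with rates ν and μ. Then E[Y] = τ and Var(Y) = σ², i.e., Y matches the first two moments of a gamma random variable with mean τ and variance σ². -/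
/-!
A sum of independent exponentials with rates `λᵢ` has mean `∑ 1/λᵢ` and variance `∑ 1/λᵢ²`,
the moments of each summand being gamma integrals. With scales `τ/n` (taken `n - 2` times) and
`τ/n · (1 ± s)`, the means add up to `τ`; in the sum of squared scales the `±s` cross terms cancel,
leaving `(τ/n)² (n + 2 s²) = τ²/j = σ²` because `2 s² = n (n - j) / j`.
-/

open MeasureTheory ProbabilityTheory Real

namespace ProbabilityTheory

open Set

lemma gammaMeasure_eq_withDensity_restrict_Ioi (a r : ℝ) :
    gammaMeasure a r = (volume.restrict (Ioi 0)).withDensity (gammaPDF a r) := by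
  rw [gammaMeasure, ← withDensity_indicator measurableSet_Ioi]
  refine withDensity_congr_ae ?_
  filter_upwards [Measure.ae_ne volume 0] with x hx
  rcases hx.lt_or_gt with hneg | hpos
  · simp [gammaPDF_of_neg hneg, hneg.not_gt]
  · simp [hpos]

variable {a r : ℝ}

lemma gammaPDFReal_mul_pow_of_pos (k : ℕ) {x : ℝ} (hx : 0 < x) :
    gammaPDFReal a r x * x ^ k = r ^ a / Gamma a * (x ^ (a + k - 1) * exp (-(r * x))) := by
  rw [gammaPDFReal, if_pos hx.le, add_sub_right_comm, rpow_add hx, rpow_natCast]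
  ring

lemma integrable_gammaMeasure_iff (ha : 0 < a) (hr : 0 < r) {g : ℝ → ℝ} :
    Integrable g (gammaMeasure a r) ↔
      IntegrableOn (fun x ↦ gammaPDFReal a r x * g x) (Ioi 0) := by
  rw [gammaMeasure_eq_withDensity_restrict_Ioi, IntegrableOn,
    integrable_withDensity_iff_integrable_smul' (f := gammaPDF a r)
      (measurable_gammaPDFReal a r).ennreal_ofReal
      (.of_forall fun _ ↦ ENNReal.ofReal_lt_top)]
  simp only [gammaPDF, ENNReal.toReal_ofReal (gammaPDFReal_nonneg ha hr _), smul_eq_mul]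

lemma integral_gammaMeasure (ha : 0 < a) (hr : 0 < r) (g : ℝ → ℝ) :
    ∫ x, g x ∂gammaMeasure a r = ∫ x in Ioi 0, gammaPDFReal a r x * g x := by
  rw [gammaMeasure_eq_withDensity_restrict_Ioi,
    integral_withDensity_eq_integral_toReal_smul (f := gammaPDF a r)
      (measurable_gammaPDFReal a r).ennreal_ofReal (.of_forall fun _ ↦ ENNReal.ofReal_lt_top)]
  simp only [gammaPDF, ENNReal.toReal_ofReal (gammaPDFReal_nonneg ha hr _), smul_eq_mul]

lemma integrable_pow_gammaMeasure (ha : 0 < a) (hr : 0 < r) (k : ℕ) :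
    Integrable (fun x ↦ x ^ k) (gammaMeasure a r) := by
  rw [integrable_gammaMeasure_iff ha hr]
  have h := (integrableOn_rpow_mul_exp_neg_mul_rpow (s := a + k - 1)
    (by linarith [k.cast_nonneg (α := ℝ)]) one_pos hr)
    |>.const_mul (r ^ a / Gamma a)
  refine IntegrableOn.congr_fun h (fun x hx ↦ ?_) measurableSet_Ioi
  simp [gammaPDFReal_mul_pow_of_pos k hx]

lemma integral_pow_gammaMeasure (ha : 0 < a) (hr : 0 < r) (k : ℕ) :
    ∫ x, x ^ k ∂gammaMeasure a r = Gamma (a + k) / (Gamma a * r ^ k) := by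
  rw [integral_gammaMeasure ha hr,
    setIntegral_congr_fun measurableSet_Ioi fun x hx ↦ gammaPDFReal_mul_pow_of_pos k hx,
    integral_const_mul, integral_rpow_mul_exp_neg_mul_Ioi (by positivity) hr,
    rpow_add (by positivity), rpow_natCast, one_div, inv_rpow hr.le, inv_pow]
  have := Gamma_pos_of_pos ha
  field_simp

variable {r : ℝ}

lemma integral_pow_expMeasure (hr : 0 < r) (k : ℕ) :
    ∫ x, x ^ k ∂expMeasure r = k.factorial / r ^ k := by
  rw [expMeasure, integral_pow_gammaMeasure one_pos hr, add_comm, Gamma_nat_eq_factorial,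
    Gamma_one, one_mul]

lemma memLp_id_expMeasure (hr : 0 < r) : MemLp id 2 (expMeasure r) :=
  (memLp_two_iff_integrable_sq aestronglyMeasurable_id).mpr
    (integrable_pow_gammaMeasure one_pos hr 2)

lemma integral_id_expMeasure (hr : 0 < r) : ∫ x, x ∂expMeasure r = r⁻¹ := by
  simpa using integral_pow_expMeasure hr 1

lemma variance_id_expMeasure (hr : 0 < r) : Var[id; expMeasure r] = (r ^ 2)⁻¹ := by
  have := isProbabilityMeasure_expMeasure hr
  rw [variance_eq_sub (memLp_id_expMeasure hr)]
  simp only [Pi.pow_apply, id_eq, integral_pow_expMeasure hr 2, integral_id_expMeasure hr]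
  norm_num
  ring

variable {Ω : Type*} {mΩ : MeasurableSpace Ω} {P : Measure Ω}

lemma HasLaw.memLp_iff {μ : Measure ℝ} {X : Ω → ℝ} (hX : HasLaw X μ P) {p : ENNReal} :
    MemLp X p P ↔ MemLp id p μ := by
  rw [← hX.map_eq, memLp_map_measure_iff aestronglyMeasurable_id hX.aemeasurable]
  rfl

variable {ι : Type*} [Fintype ι] {X : ι → Ω → ℝ} {rate : ι → ℝ}

lemma integral_sum_of_hasLaw_expMeasure [IsFiniteMeasure P] (hrate : ∀ i, 0 < rate i)
    (hX : ∀ i, HasLaw (X i) (expMeasure (rate i)) P) :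
    ∫ ω, ∑ i, X i ω ∂P = ∑ i, (rate i)⁻¹ := by
  rw [integral_finsetSum _ fun i _ ↦
    (((hX i).memLp_iff).mpr (memLp_id_expMeasure (hrate i))).integrable one_le_two]
  simp_rw [(hX _).integral_eq, integral_id_expMeasure (hrate _)]

lemma variance_sum_of_hasLaw_expMeasure (hrate : ∀ i, 0 < rate i)
    (hX : ∀ i, HasLaw (X i) (expMeasure (rate i)) P)
    (hindep : Pairwise fun i j ↦ IndepFun (X i) (X j) P) :
    Var[fun ω ↦ ∑ i, X i ω; P] = ∑ i, (rate i ^ 2)⁻¹ := by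
  rw [← Finset.sum_fn, IndepFun.variance_sum
    (fun i _ ↦ ((hX i).memLp_iff).mpr (memLp_id_expMeasure (hrate i)))
    (fun i _ j _ hij ↦ hindep hij)]
  simp_rw [(hX _).variance_eq, variance_id_expMeasure (hrate _)]

end ProbabilityTheory

lemma Fin.sum_univ_ite_lt_ite_eq {α M : Type*} [AddCommMonoid M] (m : ℕ) (f : α → M)
    (a b c : α) :
    ∑ i : Fin (m + 2), f (if (i : ℕ) < m then a else if (i : ℕ) = m then b else c) =
      m • f a + f b + f c := by
  simp [Fin.sum_univ_castSucc]

lemma sq_add_sq_hypoexponential_scales {n j τ s : ℝ} (hn : n ≠ 0) (hj : j ≠ 0)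
    (hs : s ^ 2 = n * (n - j) / (2 * j)) :
    (n - 2) * (τ / n) ^ 2 + (τ / n * (1 + s)) ^ 2 + (τ / n * (1 - s)) ^ 2 = τ ^ 2 / j := by
  calc _ = (τ / n) ^ 2 * (n + 2 * s ^ 2) := by ring
    _ = τ ^ 2 / j := by rw [hs]; field_simp; ring

theorem hypoexponential_moment_matching_general
    (j τ σ : ℝ) (hj : 0 < j) (hτ : 0 < τ)
    (hshape : j = τ ^ 2 / σ ^ 2)
    (n : ℕ) (hn : (n : ℤ) = max ⌈j⌉ 2)
    (hjn : j ≤ n)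
    (ν μ : ℝ)
    (hν : 1 / ν = (τ / n) * (1 + Real.sqrt (n * (n - j) / (2 * j))))
    (hμ : 1 / μ = (τ / n) * (1 - Real.sqrt (n * (n - j) / (2 * j))))
    (hμ_pos : 0 < (τ / n) * (1 - Real.sqrt (n * (n - j) / (2 * j))))
    (rates : Fin n → ℝ)
    (hrates : ∀ i : Fin n,
      rates i = if (i : ℕ) < n - 2 then n / τ
        else if (i : ℕ) = n - 2 then ν else μ)
    {Ω : Type*} [MeasurableSpace Ω] (P : Measure Ω) [IsProbabilityMeasure P]
    (X : Fin n → Ω → ℝ)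
    (hX_meas : ∀ i, Measurable (X i))
    (hX_indep : iIndepFun X P)
    (hX_law : ∀ i, P.map (X i) = expMeasure (rates i))
    (Y : Ω → ℝ) (hY : Y = fun ω => ∑ i : Fin n, X i ω) :
    (∫ ω, Y ω ∂P) = τ ∧ variance Y P = σ ^ 2 := by
  obtain ⟨m, rfl⟩ : ∃ m, n = m + 2 :=
    ⟨n - 2, by have : (2 : ℤ) ≤ n := hn ▸ le_max_right _ _; omega⟩
  set s := √((m + 2 : ℕ) * ((m + 2 : ℕ) - j) / (2 * j))
  have hs : s ^ 2 = (m + 2 : ℕ) * ((m + 2 : ℕ) - j) / (2 * j) :=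
    sq_sqrt (div_nonneg (mul_nonneg (by positivity) (sub_nonneg.mpr hjn)) (by positivity))
  have hσ_sq : σ ^ 2 = τ ^ 2 / j := by rw [hshape, div_div_cancel₀ (by positivity)]
  rw [one_div] at hν hμ
  simp only [add_tsub_cancel_right] at hrates
  have hrate_pos : ∀ i, 0 < rates i := by
    intro i
    rw [hrates i]
    split_ifs
    · positivity
    · exact inv_pos.mp (hν ▸ by positivity)
    · exact inv_pos.mp (hμ ▸ hμ_pos)
  have hlaw : ∀ i, HasLaw (X i) (expMeasure (rates i)) P :=
    fun i ↦ ⟨(hX_meas i).aemeasurable, hX_law i⟩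
  subst hY
  rw [integral_sum_of_hasLaw_expMeasure hrate_pos hlaw,
    variance_sum_of_hasLaw_expMeasure hrate_pos hlaw fun i j hij ↦ hX_indep.indepFun hij]
  simp only [hrates]
  constructor
  · rw [Fin.sum_univ_ite_lt_ite_eq, inv_div, hν, hμ, nsmul_eq_mul]
    field_simp
    push_cast
    ring
  · rw [Fin.sum_univ_ite_lt_ite_eq (f := fun x ↦ (x ^ 2)⁻¹), ← inv_pow, ← inv_pow, ← inv_pow,
      inv_div, hν, hμ, nsmul_eq_mul, hσ_sq, ← sq_add_sq_hypoexponential_scales (by positivity)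
      hj.ne' hs]
    push_cast
    ring

/-- Theorem 3.1 of Cassidy et al. 2022: the hypoexponential random
variable `Y`, the sum of `n = max ⌈j⌉ 2` independent exponentials, `n - 2` of rate
`n/τ` and the last two of rates `ν` and `μ` as specified, has mean `τ` and variance
`σ² = τ²/j`, matching the first two moments of a gamma with mean `τ` and variance
`σ²`. -/
theorem hypoexponential_moment_matching
    (j τ σ : ℝ) (hj : 0 < j) (hτ : 0 < τ) (hσ : 0 < σ)
    (hshape : j = τ ^ 2 / σ ^ 2)
    (n : ℕ) (hn : (n : ℤ) = max ⌈j⌉ 2)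
    (hjn : j ≤ n)
    (ν μ : ℝ)
    (hν : 1 / ν = (τ / n) * (1 + Real.sqrt (n * (n - j) / (2 * j))))
    (hμ : 1 / μ = (τ / n) * (1 - Real.sqrt (n * (n - j) / (2 * j))))
    (hμ_pos : 0 < (τ / n) * (1 - Real.sqrt (n * (n - j) / (2 * j))))
    (rates : Fin n → ℝ)
    (hrates : ∀ i : Fin n,
      rates i = if (i : ℕ) < n - 2 then n / τ
        else if (i : ℕ) = n - 2 then ν else μ)
    {Ω : Type*} [MeasurableSpace Ω] (P : Measure Ω) [IsProbabilityMeasure P]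
    (X : Fin n → Ω → ℝ)
    (hX_meas : ∀ i, Measurable (X i))
    (hX_indep : iIndepFun X P)
    (hX_law : ∀ i, P.map (X i) = expMeasure (rates i))
    (Y : Ω → ℝ) (hY : Y = fun ω => ∑ i : Fin n, X i ω) :
    (∫ ω, Y ω ∂P) = τ ∧ variance Y P = σ ^ 2 :=
  hypoexponential_moment_matching_general j τ σ hj hτ hshape n hn hjn ν μ hν hμ hμ_pos rates hrates
    P X hX_meas hX_indep hX_law Y hY
end

section
/- Let f be bounded continuous, β(a) = β₀ e^{−k_d a}, and define L_n(t) = ∫₀^∞ f(t−a) β(a) g_b^n(a) da with g_b^n the Erlang density. Then L₁'(t) = β₀ b f(t) − (b + k_d) L₁(t) and, for n ≥ 2, L_n'(t) = b(L_{n−1}(t) − L_n(t)) − k_d L_n(t). -/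
/-!
Substituting `s = t - a` and writing `c = b + k_d`, one gets
`L_{k+1}(t) = β₀ b^{k+1} e^{-ct} / k! · ∫_{-∞}^t h(s) (t - s)^k ds` with `h(s) = f(s) e^{cs}`.
Expanding `(t - s)^k` binomially writes this integral as a polynomial in `t` whose coefficients
are the moments `∫_{-∞}^t h(s) s^j ds`, each differentiable by the fundamental theorem of calculus.
Differentiating, the boundary terms recombine to `h(t) (t - t)^k = 0`, so the `k`-th power integral
has derivative `k` times the `(k-1)`-th one; the product rule with `e^{-ct}` gives the chain.
-/

open MeasureTheory Set Real

theorem hasDerivAt_setIntegral_Iic {E : Type*} [NormedAddCommGroup E] [NormedSpace ℝ E]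
    [CompleteSpace E] {h : ℝ → E} (hcont : Continuous h) (hint : ∀ a, IntegrableOn h (Iic a))
    (t : ℝ) : HasDerivAt (fun u => ∫ s in Iic u, h s) (h t) t := by
  have hsplit : (fun u => ∫ s in Iic u, h s) =
      fun u => (∫ s in Iic 0, h s) + ∫ s in (0 : ℝ)..u, h s := by
    funext u
    rw [← intervalIntegral.integral_Iic_sub_Iic (hint 0) (hint u), add_sub_cancel]
  rw [hsplit]
  exact (hcont.integral_hasStrictDerivAt 0 t).hasDerivAt.const_add _

theorem integral_Ioi_zero_eq_integral_Iic_sub (g : ℝ → ℝ) (t : ℝ) :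
    ∫ a in Ioi 0, g a = ∫ s in Iic t, g (t - s) := by
  have hpre : (fun s => t - s) ⁻¹' Ici 0 = Iic t := by ext; simp
  rw [← integral_Ici_eq_integral_Ioi, ← hpre]
  exact ((Measure.measurePreserving_sub_left volume t).setIntegral_preimage_emb
    (Homeomorph.subLeft t).measurableEmbedding g (Ici 0)).symm

theorem integrableOn_Iic_pow_mul_exp {c : ℝ} (hc : 0 < c) (j : ℕ) (t : ℝ) :
    IntegrableOn (fun s => s ^ j * exp (c * s)) (Iic t) := by
  have hdecay :
      (fun x => (-x) ^ j * exp (c * -x)) =O[Filter.atTop] fun x => exp (-(c / 2) * x) := by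
    have hpow : (fun x : ℝ => (-x) ^ j) =O[Filter.atTop] fun x => exp (c / 2 * x) := by
      rw [show (fun x : ℝ => (-x) ^ j) = fun x => (-1) ^ j * x ^ j from
        funext fun x => neg_pow x j]
      exact ((isLittleO_pow_exp_pos_mul_atTop j (half_pos hc)).isBigO).const_mul_left _
    refine (hpow.mul (Asymptotics.isBigO_refl (fun x => exp (c * -x)) _)).congr_right fun x => ?_
    rw [← exp_add]; ring_nf
  have hIoi := integrable_of_isBigO_exp_neg (half_pos hc) (by fun_prop) hdecay (a := -t)
  simpa using ((integrableOn_Ici_iff_integrableOn_Ioi (by finiteness)).mpr hIoi).comp_neg_Iic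

noncomputable def iicMoment (h : ℝ → ℝ) (j : ℕ) (t : ℝ) : ℝ :=
  ∫ s in Iic t, h s * s ^ j

noncomputable def iicPowIntegral (h : ℝ → ℝ) (k : ℕ) (t : ℝ) : ℝ :=
  ∫ s in Iic t, h s * (t - s) ^ k

section
variable {h : ℝ → ℝ}

theorem hasDerivAt_iicMoment (hcont : Continuous h)
    (hmom : ∀ j t, IntegrableOn (fun s => h s * s ^ j) (Iic t)) (j : ℕ) (t : ℝ) :
    HasDerivAt (iicMoment h j) (h t * t ^ j) t :=
  hasDerivAt_setIntegral_Iic (by fun_prop) (hmom j) t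

theorem iicPowIntegral_eq_sum (hmom : ∀ j t, IntegrableOn (fun s => h s * s ^ j) (Iic t))
    (k : ℕ) (t : ℝ) :
    iicPowIntegral h k t =
      ∑ m ∈ Finset.range (k + 1), (-1) ^ (m + k) * t ^ m * k.choose m * iicMoment h (k - m) t := by
  have hexpand : ∀ s, h s * (t - s) ^ k = ∑ m ∈ Finset.range (k + 1),
      (-1) ^ (m + k) * t ^ m * k.choose m * (h s * s ^ (k - m)) := fun s => by
    rw [sub_pow, Finset.mul_sum]
    exact Finset.sum_congr rfl fun m _ => by ring
  simp_rw [iicPowIntegral, hexpand]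
  rw [integral_finsetSum _ fun m _ => (hmom (k - m) t).const_mul _]
  exact Finset.sum_congr rfl fun m _ => integral_const_mul _ _

/-- The formal derivative of the binomial expansion of `(t - s) ^ (k + 1)` in `t`. -/
theorem sum_choose_mul_pow_pred_shift (G : ℕ → ℝ) (t : ℝ) (k : ℕ) :
    ∑ m ∈ Finset.range (k + 2),
        (-1) ^ (m + (k + 1)) * (k + 1).choose m * (m * t ^ (m - 1)) * G (k + 1 - m)
      = (k + 1) * ∑ m ∈ Finset.range (k + 1), (-1) ^ (m + k) * t ^ m * k.choose m * G (k - m) := by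
  rw [Finset.sum_range_succ', Finset.mul_sum]
  simp only [CharP.cast_eq_zero, zero_mul, mul_zero, add_zero]
  refine Finset.sum_congr rfl fun i _ => ?_
  have hchoose : ((k + 1).choose (i + 1) : ℝ) * (i + 1) = (k + 1) * k.choose i := by
    exact_mod_cast (Nat.add_one_mul_choose_eq k i).symm
  simp only [Nat.add_sub_cancel, Nat.add_sub_add_right, Nat.cast_add, Nat.cast_one]
  rw [show i + 1 + (k + 1) = i + k + 2 by ring, pow_add (-1 : ℝ) _ 2]
  linear_combination ((-1) ^ (i + k) * t ^ i * G (k - i)) * hchoose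

theorem hasDerivAt_iicPowIntegral_zero (hcont : Continuous h)
    (hmom : ∀ j t, IntegrableOn (fun s => h s * s ^ j) (Iic t)) (t : ℝ) :
    HasDerivAt (iicPowIntegral h 0) (h t) t := by
  have hzero : iicPowIntegral h 0 = iicMoment h 0 := funext fun u => by
    simp [iicPowIntegral, iicMoment]
  simpa [hzero] using hasDerivAt_iicMoment hcont hmom 0 t

theorem hasDerivAt_iicPowIntegral_succ (hcont : Continuous h)
    (hmom : ∀ j t, IntegrableOn (fun s => h s * s ^ j) (Iic t)) (k : ℕ) (t : ℝ) :
    HasDerivAt (iicPowIntegral h (k + 1)) ((k + 1) * iicPowIntegral h k t) t := by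
  rw [funext (iicPowIntegral_eq_sum hmom (k + 1)), iicPowIntegral_eq_sum hmom k,
    ← sum_choose_mul_pow_pred_shift fun j => iicMoment h j t]
  have hterm : ∀ m ∈ Finset.range (k + 1 + 1), HasDerivAt
      (fun u => (-1) ^ (m + (k + 1)) * u ^ m * (k + 1).choose m * iicMoment h (k + 1 - m) u)
      ((-1) ^ (m + (k + 1)) * (k + 1).choose m * (m * t ^ (m - 1)) * iicMoment h (k + 1 - m) t
        + (-1) ^ (m + (k + 1)) * t ^ m * t ^ (k + 1 - m) * (k + 1).choose m * h t) t := by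
    intro m _
    refine ((((hasDerivAt_pow m t).const_mul ((-1) ^ (m + (k + 1)))).mul_const
      ((k + 1).choose m : ℝ)).mul (hasDerivAt_iicMoment hcont hmom (k + 1 - m) t)).congr_deriv ?_
    ring
  refine (HasDerivAt.fun_sum hterm).congr_deriv ?_
  -- the boundary terms reassemble to `h t * (t - t) ^ (k + 1) = 0`
  rw [Finset.sum_add_distrib, ← Finset.sum_mul, ← sub_pow, sub_self, zero_pow k.succ_ne_zero,
    zero_mul, add_zero]
end

theorem HasDerivAt.exp_neg_mul_mul {P : ℝ → ℝ} {P' c t : ℝ} (hP : HasDerivAt P P' t) :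
    HasDerivAt (fun u => Real.exp (-c * u) * P u)
      (Real.exp (-c * t) * P' - c * (Real.exp (-c * t) * P t)) t := by
  refine (((hasDerivAt_id' t).const_mul (-c)).exp.mul hP).congr_deriv ?_
  ring

noncomputable def gammaKernelConv (f : ℝ → ℝ) (c : ℝ) (k : ℕ) (t : ℝ) : ℝ :=
  ∫ a in Ioi 0, f (t - a) * (a ^ k / k.factorial * exp (-c * a))

theorem gammaKernelConv_eq_iicPowIntegral (f : ℝ → ℝ) (c : ℝ) (k : ℕ) :
    gammaKernelConv f c k =
      fun t => (k.factorial : ℝ)⁻¹ *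
        (exp (-c * t) * iicPowIntegral (fun s => f s * exp (c * s)) k t) := by
  funext t
  rw [gammaKernelConv, integral_Ioi_zero_eq_integral_Iic_sub _ t, iicPowIntegral,
    ← integral_const_mul, ← integral_const_mul]
  congr 1
  funext s
  rw [sub_sub_cancel, show -c * (t - s) = -c * t + c * s by ring, exp_add]
  ring

section
variable {f : ℝ → ℝ} {c M : ℝ}

theorem integrableOn_Iic_mul_exp_mul_pow (hc : 0 < c) (hf : Continuous f) (hM : ∀ x, |f x| ≤ M)
    (j : ℕ) (t : ℝ) : IntegrableOn (fun s => f s * exp (c * s) * s ^ j) (Iic t) :=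
  IntegrableOn.congr_fun ((integrableOn_Iic_pow_mul_exp hc j t).bdd_mul
    hf.aestronglyMeasurable.restrict (ae_of_all _ hM)) (fun s _ => by ring) measurableSet_Iic

theorem hasDerivAt_gammaKernelConv_zero (hc : 0 < c) (hf : Continuous f) (hM : ∀ x, |f x| ≤ M)
    (t : ℝ) : HasDerivAt (gammaKernelConv f c 0) (f t - c * gammaKernelConv f c 0 t) t := by
  have hP := hasDerivAt_iicPowIntegral_zero (by fun_prop)
    (integrableOn_Iic_mul_exp_mul_pow hc hf hM) t
  rw [gammaKernelConv_eq_iicPowIntegral]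
  refine (hP.exp_neg_mul_mul.const_mul _).congr_deriv ?_
  rw [mul_left_comm, ← exp_add, neg_mul, neg_add_cancel, exp_zero]
  simp

theorem hasDerivAt_gammaKernelConv_succ (hc : 0 < c) (hf : Continuous f) (hM : ∀ x, |f x| ≤ M)
    (k : ℕ) (t : ℝ) :
    HasDerivAt (gammaKernelConv f c (k + 1))
      (gammaKernelConv f c k t - c * gammaKernelConv f c (k + 1) t) t := by
  have hP := hasDerivAt_iicPowIntegral_succ (by fun_prop)
    (integrableOn_Iic_mul_exp_mul_pow hc hf hM) k t
  rw [gammaKernelConv_eq_iicPowIntegral, gammaKernelConv_eq_iicPowIntegral]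
  refine (hP.exp_neg_mul_mul.const_mul _).congr_deriv ?_
  rw [Nat.factorial_succ, Nat.cast_mul]
  field_simp
  push_cast
  ring

end

theorem linear_chain_trick_discounted_general
    (b β₀ kd : ℝ) (hb : 0 < b) (hkd : 0 < kd)
    (g : ℕ → ℝ → ℝ)
    (hg : ∀ n s, g n s = b ^ n * s ^ (n - 1) * Real.exp (-b * s) / (Nat.factorial (n - 1) : ℝ))
    (β : ℝ → ℝ) (hβ : ∀ a, β a = β₀ * Real.exp (-kd * a))
    (f : ℝ → ℝ) (hf_cont : Continuous f) (M : ℝ) (hf_bdd : ∀ x, |f x| ≤ M)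
    (L : ℕ → ℝ → ℝ)
    (hL : ∀ n t, L n t = ∫ a in Ioi (0:ℝ), f (t - a) * β a * g n a) :
    (∀ t : ℝ, HasDerivAt (L 1) (β₀ * b * f t - (b + kd) * L 1 t) t) ∧
    (∀ n : ℕ, 2 ≤ n → ∀ t : ℝ,
      HasDerivAt (L n) (b * (L (n - 1) t - L n t) - kd * L n t) t) := by
  have hc : 0 < b + kd := add_pos hb hkd
  have hL_eq : ∀ n, L (n + 1) = fun t => β₀ * b ^ (n + 1) * gammaKernelConv f (b + kd) n t := by
    intro n
    funext t
    rw [hL, gammaKernelConv, ← integral_const_mul]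
    congr 1
    funext a
    rw [hβ, hg, Nat.add_sub_cancel, show -(b + kd) * a = -kd * a + -b * a by ring, exp_add]
    ring
  constructor
  · intro t
    rw [hL_eq 0]
    refine ((hasDerivAt_gammaKernelConv_zero hc hf_cont hf_bdd t).const_mul _).congr_deriv ?_
    ring
  · intro n hn t
    obtain ⟨k, rfl⟩ : ∃ k, n = k + 1 + 1 := ⟨n - 2, by omega⟩
    rw [Nat.add_sub_cancel, hL_eq (k + 1), hL_eq k]
    refine ((hasDerivAt_gammaKernelConv_succ hc hf_cont hf_bdd k t).const_mul _).congr_deriv ?_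
    ring

/-- linear chain trick with exponentially discounted Erlang kernel:
for bounded continuous `f`, `β(a) = β₀ e^{-k_d a}`, and
`L_n(t) = ∫₀^∞ f(t-a) β(a) g_b^n(a) da`, one has
`L₁' = β₀ b f(t) - (b + k_d) L₁` and `L_n' = b (L_{n-1} - L_n) - k_d L_n` for `n ≥ 2`. -/
theorem linear_chain_trick_discounted
    (b β₀ kd : ℝ) (hb : 0 < b) (hβ₀ : 0 < β₀) (hkd : 0 < kd)
    (g : ℕ → ℝ → ℝ)
    (hg : ∀ n s, g n s = b ^ n * s ^ (n - 1) * Real.exp (-b * s) / (Nat.factorial (n - 1) : ℝ))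
    (β : ℝ → ℝ) (hβ : ∀ a, β a = β₀ * Real.exp (-kd * a))
    (f : ℝ → ℝ) (hf_cont : Continuous f) (M : ℝ) (hf_bdd : ∀ x, |f x| ≤ M)
    (L : ℕ → ℝ → ℝ)
    (hL : ∀ n t, L n t = ∫ a in Ioi (0:ℝ), f (t - a) * β a * g n a) :
    (∀ t : ℝ, HasDerivAt (L 1) (β₀ * b * f t - (b + kd) * L 1 t) t) ∧
    (∀ n : ℕ, 2 ≤ n → ∀ t : ℝ,
      HasDerivAt (L n) (b * (L (n - 1) t - L n t) - kd * L n t) t) :=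
  linear_chain_trick_discounted_general b β₀ kd hb hkd g hg β hβ f hf_cont M hf_bdd L hL
end
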